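/- The space Ĩ with the order topology induced by the linear order <_XY is compact. -/

import Mathlib

/-- The set of intuitionistic fuzzy values Ĩ = {⟨μ,ν⟩ ∈ [0,1]² : μ + ν ≤ 1}. -/
def IFV : Set (ℝ × ℝ) :=
  {p | 0 ≤ p.1 ∧ p.1 ≤ 1 ∧ 0 ≤ p.2 ∧ p.2 ≤ 1 ∧ p.1 + p.2 ≤ 1}

/-- Score function s(α) = μ_α − ν_α. -/
def sc (p : ℝ × ℝ) : ℝ := p.1 - p.2

/-- Accuracy function h(α) = μ_α + ν_α. -/
def ac (p : ℝ × ℝ) : ℝ := p.1 + p.2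

/-- Strict Xu–Yager order. -/
def ltXY (a b : ℝ × ℝ) : Prop := sc a < sc b ∨ (sc a = sc b ∧ ac a < ac b)

/-- Nonstrict Xu–Yager order. -/
def leXY (a b : ℝ × ℝ) : Prop := sc a < sc b ∨ (sc a = sc b ∧ ac a ≤ ac b)

/-- The space of IFVs as a type. -/
def IFVt : Type := {p : ℝ × ℝ // p ∈ IFV}

/-- The linear order on IFVs given by the Xu–Yager order
(lexicographic in (score, accuracy)). -/
noncomputable instance : LinearOrder IFVt :=
  LinearOrder.lift' (fun x : IFVt => toLex (sc x.1, ac x.1)) (by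
    intro x y hxy
    have h1 : sc x.1 = sc y.1 := congrArg (fun z => (ofLex z).1) hxy
    have h2 : ac x.1 = ac y.1 := congrArg (fun z => (ofLex z).2) hxy
    simp only [sc, ac] at h1 h2
    have e1 : x.1.1 = y.1.1 := by linarith
    have e2 : x.1.2 = y.1.2 := by linarith
    exact Subtype.ext (Prod.ext e1 e2))

/-- The order topology on IFVs induced by the linear order <_XY. -/
noncomputable instance : TopologicalSpace IFVt := Preorder.topology IFVt

instance : OrderTopology IFVt := ⟨rfl⟩

namespace IFVaux

lemma le_iff (x y : IFVt) :
    x ≤ y ↔ sc x.1 < sc y.1 ∨ (sc x.1 = sc y.1 ∧ ac x.1 ≤ ac y.1) :=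
  Prod.Lex.le_iff (x := toLex (sc x.1, ac x.1)) (y := toLex (sc y.1, ac y.1))

lemma bounds (x : IFVt) :
    -1 ≤ sc x.1 ∧ sc x.1 ≤ 1 ∧ |sc x.1| ≤ ac x.1 ∧ ac x.1 ≤ 1 := by
  obtain ⟨h0, h1, h2, h3, h4⟩ := x.2
  refine ⟨by simp [sc]; linarith, by simp [sc]; linarith, ?_, by simp [ac]; linarith⟩
  rw [abs_le]; constructor <;> simp [sc, ac] <;> linarith

/-- Build an IFV from score `s` and accuracy `h`. -/
noncomputable def pt (s h : ℝ) (hs : |s| ≤ h) (h1 : h ≤ 1) : IFVt :=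
  ⟨((h + s) / 2, (h - s) / 2), by
    rw [abs_le] at hs
    exact ⟨by linarith, by linarith, by linarith, by linarith, by linarith⟩⟩

lemma sc_pt (s h : ℝ) (hs : |s| ≤ h) (h1 : h ≤ 1) : sc (pt s h hs h1).1 = s := by
  simp [pt, sc]; ring

lemma ac_pt (s h : ℝ) (hs : |s| ≤ h) (h1 : h ≤ 1) : ac (pt s h hs h1).1 = h := by
  simp [pt, ac]; ring

/-- The score image of a set. -/
def scS (S : Set IFVt) : Set ℝ := (fun x : IFVt => sc x.1) '' S

lemma scS_bdd (S : Set IFVt) : BddAbove (scS S) :=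
  ⟨1, by rintro _ ⟨x, _, rfl⟩; exact (bounds x).2.1⟩

lemma s0_mem {S : Set IFVt} (hS : S.Nonempty) : sSup (scS S) ∈ Set.Icc (-1 : ℝ) 1 := by
  obtain ⟨x, hx⟩ := hS
  constructor
  · exact le_trans (bounds x).1 (le_csSup (scS_bdd S) ⟨x, hx, rfl⟩)
  · exact csSup_le ⟨_, x, hx, rfl⟩ (by rintro _ ⟨y, _, rfl⟩; exact (bounds y).2.1)

/-- The accuracy image of the top-score slice. -/
def acS (S : Set IFVt) : Set ℝ :=
  (fun x : IFVt => ac x.1) '' {x ∈ S | sc x.1 = sSup (scS S)}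

lemma acS_bdd (S : Set IFVt) : BddAbove (acS S) :=
  ⟨1, by rintro _ ⟨x, _, rfl⟩; exact (bounds x).2.2.2⟩

open Classical in
/-- Supremum of a set of IFVs. -/
noncomputable def sup (S : Set IFVt) : IFVt :=
  if hS : S.Nonempty then
    if hA : (acS S).Nonempty then
      pt (sSup (scS S)) (sSup (acS S))
        (by
          obtain ⟨_, x, ⟨hxS, hxs⟩, rfl⟩ := hA
          refine le_trans ?_ (le_csSup (acS_bdd S) ⟨x, ⟨hxS, hxs⟩, rfl⟩)
          rw [← hxs]; exact (bounds x).2.2.1)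
        (csSup_le hA (by rintro _ ⟨x, _, rfl⟩; exact (bounds x).2.2.2))
    else
      pt (sSup (scS S)) |sSup (scS S)| le_rfl
        (abs_le.2 ⟨(s0_mem hS).1, (s0_mem hS).2⟩)
  else pt (-1) 1 (by norm_num) le_rfl

lemma isLUB_sup (S : Set IFVt) : IsLUB S (sup S) := by
  classical
  by_cases hS : S.Nonempty
  · constructor
    · -- upper bound
      intro x hx
      have hs_le : sc x.1 ≤ sSup (scS S) := le_csSup (scS_bdd S) ⟨x, hx, rfl⟩
      rcases lt_or_eq_of_le hs_le with hlt | heq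
      · rw [le_iff]
        left
        unfold sup
        rw [dif_pos hS]
        split <;> simp only [sc_pt] <;> exact hlt
      · have hA : (acS S).Nonempty := ⟨ac x.1, x, ⟨hx, heq⟩, rfl⟩
        rw [le_iff]
        right
        unfold sup
        rw [dif_pos hS, dif_pos hA]
        simp only [sc_pt, ac_pt]
        exact ⟨heq, le_csSup (acS_bdd S) ⟨x, ⟨hx, heq⟩, rfl⟩⟩
    · -- least upper bound
      intro y hy
      have hsy : sSup (scS S) ≤ sc y.1 := by
        apply csSup_le (hS.image _)
        rintro _ ⟨x, hx, rfl⟩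
        rcases (le_iff x y).1 (hy hx) with h | h
        · exact h.le
        · exact h.1.le
      rcases lt_or_eq_of_le hsy with hlt | heq
      · rw [le_iff]; left
        unfold sup
        rw [dif_pos hS]
        split <;> simp only [sc_pt] <;> exact hlt
      · rw [le_iff]
        unfold sup
        rw [dif_pos hS]
        by_cases hA : (acS S).Nonempty
        · rw [dif_pos hA]
          right
          simp only [sc_pt, ac_pt]
          refine ⟨heq, csSup_le hA ?_⟩
          rintro _ ⟨x, ⟨hxS, hxs⟩, rfl⟩
          rcases (le_iff x y).1 (hy hxS) with h | h
          · exact absurd h (by rw [hxs, heq]; exact lt_irrefl _)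
          · exact h.2
        · rw [dif_neg hA]
          right
          simp only [sc_pt, ac_pt]
          refine ⟨heq, ?_⟩
          rw [heq]
          exact (bounds y).2.2.1
  · -- empty set: sup is the bottom element
    rw [Set.not_nonempty_iff_eq_empty] at hS
    subst hS
    refine ⟨by simp, ?_⟩
    intro y _
    unfold sup
    rw [dif_neg (by simp)]
    rw [le_iff, sc_pt, ac_pt]
    rcases lt_or_eq_of_le (bounds y).1 with hlt | heq
    · left; exact hlt
    · right
      refine ⟨heq, ?_⟩
      have := (bounds y).2.2.1
      rw [← heq] at this
      simpa using this

noncomputable instance : SupSet IFVt := ⟨sup⟩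

noncomputable def completeLattice : CompleteLattice IFVt :=
  { (inferInstance : Lattice IFVt), completeLatticeOfSup IFVt isLUB_sup with }

noncomputable instance : CompleteLinearOrder IFVt :=
  letI := completeLattice
  { completeLattice, (inferInstance : LinearOrder IFVt),
    @LinearOrder.toBiheytingAlgebra IFVt _ completeLattice.toBoundedOrder with }

end IFVaux

/-- Ĩ with the order topology induced by <_XY is compact. -/
theorem ifv_compactSpace : CompactSpace IFVt := by
  exact @compactSpace_of_completeLinearOrder IFVt _ _ (instOrderTopologyIFVt)
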